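/- arXiv:2310.04711 — 3 statements merged into one kernel-verified Lean document; each statement's English description precedes it below -/
import Mathlib

section
/- Let Q be a real-valued query on databases with global sensitivity GS_Q = sup over neighboring databases D, D' of |Q(D) - Q(D')|. The mechanism A(D) = Q(D) + Lap(GS_Q/ε) satisfies ε-differential privacy: for any neighboring D, D' and any measurable set S, Pr[A(D) ∈ S] ≤ exp(ε)·Pr[A(D') ∈ S]. -/
open MeasureTheory

/-- Laplace density with mean 0 and scale `b`. -/
noncomputable def laplacePdf (b x : ℝ) : ℝ := (1 / (2 * b)) * Real.exp (-|x| / b)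

lemma integrable_exp_neg_abs_div {b : ℝ} (hb : 0 < b) :
    Integrable (fun x : ℝ => Real.exp (-|x| / b)) := by
  have hIoi : IntegrableOn (fun x : ℝ => Real.exp (-|x| / b)) (Set.Ioi 0) := by
    refine (exp_neg_integrableOn_Ioi 0 (inv_pos.mpr hb)).congr_fun ?_ measurableSet_Ioi
    intro x hx
    show Real.exp (-b⁻¹ * x) = Real.exp (-|x| / b)
    rw [abs_of_pos (Set.mem_Ioi.mp hx)]
    ring_nf
  have hIic : IntegrableOn (fun x : ℝ => Real.exp (-|x| / b)) (Set.Iic 0) := by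
    rw [← Measure.map_neg_eq_self (volume : Measure ℝ)]
    have m : MeasurableEmbedding fun x : ℝ => -x :=
      (Homeomorph.neg ℝ).measurableEmbedding
    rw [m.integrableOn_map_iff]
    simp_rw [Function.comp_def, abs_neg, Set.neg_preimage, Set.neg_Iic, neg_zero]
    exact Iff.mpr integrableOn_Ici_iff_integrableOn_Ioi hIoi
  have h := hIic.union hIoi
  rwa [Set.Iic_union_Ioi, integrableOn_univ] at h

lemma integrable_laplacePdf_shift {b : ℝ} (hb : 0 < b) (c : ℝ) :
    Integrable (fun x : ℝ => laplacePdf b (x - c)) := by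
  unfold laplacePdf
  exact ((integrable_exp_neg_abs_div hb).comp_sub_right c).const_mul _

/-- The Laplace mechanism `A(D) = Q(D) + Lap(GS/ε)` is `ε`-differentially private:
if `GS` bounds `|Q D - Q D'|` over all neighboring databases (global sensitivity),
then for any neighboring `D, D'` and any measurable set `S`,
`Pr[A(D) ∈ S] ≤ exp ε · Pr[A(D') ∈ S]`. -/
theorem laplace_mechanism_dp {DB : Type*} (Neighbor : DB → DB → Prop)
    (Q : DB → ℝ) (GS ε : ℝ) (hGS : 0 < GS) (hε : 0 < ε)
    (hsens : ∀ D D', Neighbor D D' → |Q D - Q D'| ≤ GS)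
    (D D' : DB) (hN : Neighbor D D') (S : Set ℝ) (hS : MeasurableSet S) :
    ∫ x in S, laplacePdf (GS / ε) (x - Q D) ≤
      Real.exp ε * ∫ x in S, laplacePdf (GS / ε) (x - Q D') := by
  have hb : 0 < GS / ε := div_pos hGS hε
  set b := GS / ε with hbdef
  have hpt : ∀ x : ℝ, laplacePdf b (x - Q D) ≤ Real.exp ε * laplacePdf b (x - Q D') := by
    intro x
    unfold laplacePdf
    rw [mul_comm (Real.exp ε), mul_assoc]
    refine mul_le_mul_of_nonneg_left ?_ (by positivity)
    rw [← Real.exp_add]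
    apply Real.exp_le_exp.mpr
    have h1 : |x - Q D'| - |x - Q D| ≤ GS := by
      have := abs_sub_abs_le_abs_sub (x - Q D') (x - Q D)
      have h2 : (x - Q D') - (x - Q D) = Q D - Q D' := by ring
      rw [h2] at this
      calc |x - Q D'| - |x - Q D| ≤ |Q D - Q D'| := this
        _ ≤ GS := hsens D D' hN
    have hεb : ε * b = GS := by
      rw [hbdef]; field_simp
    have key : (|x - Q D'| - |x - Q D|) / b ≤ ε := by
      rw [div_le_iff₀ hb]; nlinarith
    rw [sub_div] at key
    simp only [neg_div]
    linarith
  have hint1 : IntegrableOn (fun x => laplacePdf b (x - Q D)) S :=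
    (integrable_laplacePdf_shift hb (Q D)).integrableOn
  have hint2 : IntegrableOn (fun x => Real.exp ε * laplacePdf b (x - Q D')) S :=
    ((integrable_laplacePdf_shift hb (Q D')).const_mul _).integrableOn
  calc ∫ x in S, laplacePdf b (x - Q D)
      ≤ ∫ x in S, Real.exp ε * laplacePdf b (x - Q D') :=
        setIntegral_mono_on hint1 hint2 hS fun x _ => hpt x
    _ = Real.exp ε * ∫ x in S, laplacePdf b (x - Q D') := integral_const_mul _ _
end

section
/- The β-smooth sensitivity SS_Q(D) = max_{t ≥ 0} exp(-β t)·LS_Q^{(t)}(D) satisfies: (1) SS_Q(D) ≥ LS_Q(D) for every D; and (2) for any neighboring D, D', SS_Q(D) ≤ exp(β)·SS_Q(D'). -/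
open scoped ENNReal

/-- Local sensitivity at distance `t`. -/
noncomputable def LSdist {DB : Type*} (d : DB → DB → ℕ) (LS : DB → ℝ≥0∞)
    (t : ℕ) (D : DB) : ℝ≥0∞ :=
  ⨆ (D' : DB) (_ : d D D' ≤ t), LS D'

/-- `β`-smooth sensitivity: `SS_Q(D) = sup_{t ≥ 0} exp (-β t) · LS_Q^{(t)}(D)`. -/
noncomputable def smoothSens {DB : Type*} (d : DB → DB → ℕ) (LS : DB → ℝ≥0∞)
    (β : ℝ) (D : DB) : ℝ≥0∞ :=
  ⨆ (t : ℕ), ENNReal.ofReal (Real.exp (-β * t)) * LSdist d LS t D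

/-- The smooth sensitivity upper-bounds the local sensitivity, and is `β`-smooth:
for neighboring databases (edit distance `1`), `SS_Q(D) ≤ exp β · SS_Q(D')`. -/
theorem smoothSens_ge_LS_and_smooth {DB : Type*} (d : DB → DB → ℕ)
    (LS : DB → ℝ≥0∞) (β : ℝ) (hβ : 0 < β)
    (hrefl : ∀ D, d D D = 0)
    (hsymm : ∀ D D', d D D' = d D' D)
    (htri : ∀ D D' D'', d D D'' ≤ d D D' + d D' D'') :
    (∀ D : DB, LS D ≤ smoothSens d LS β D) ∧
      (∀ D D' : DB, d D D' = 1 →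
        smoothSens d LS β D ≤ ENNReal.ofReal (Real.exp β) * smoothSens d LS β D') := by
  constructor
  · intro D
    have h0 : LS D ≤ LSdist d LS 0 D := by
      rw [LSdist]
      exact le_iSup₂_of_le D (by simp [hrefl]) le_rfl
    calc LS D ≤ ENNReal.ofReal (Real.exp (-β * (0:ℕ))) * LSdist d LS 0 D := by
          simpa using h0
      _ ≤ smoothSens d LS β D := by
          rw [smoothSens]
          exact le_iSup (fun t : ℕ => ENNReal.ofReal (Real.exp (-β * t)) * LSdist d LS t D) 0
  · intro D D' hDD'
    rw [smoothSens, iSup_le_iff]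
    intro t
    have hLS : LSdist d LS t D ≤ LSdist d LS (t + 1) D' := by
      rw [LSdist, iSup₂_le_iff]
      intro D'' hd
      rw [LSdist]
      have h : d D' D'' ≤ t + 1 := by
        have h1 : d D' D = 1 := by rw [hsymm]; exact hDD'
        have := htri D' D D''
        omega
      exact le_iSup₂ (f := fun (D₀ : DB) (_ : d D' D₀ ≤ t + 1) => LS D₀) D'' h
    have hexp : ENNReal.ofReal (Real.exp (-β * t)) =
        ENNReal.ofReal (Real.exp β) * ENNReal.ofReal (Real.exp (-β * (t+1:ℕ))) := by
      rw [← ENNReal.ofReal_mul (Real.exp_pos _).le, ← Real.exp_add]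
      congr 2
      push_cast
      ring
    calc ENNReal.ofReal (Real.exp (-β * t)) * LSdist d LS t D
        ≤ ENNReal.ofReal (Real.exp β) * (ENNReal.ofReal (Real.exp (-β * (t+1:ℕ))) *
            LSdist d LS (t+1) D') := by
          rw [← mul_assoc, ← hexp]
          exact mul_le_mul_right hLS _
      _ ≤ ENNReal.ofReal (Real.exp β) * smoothSens d LS β D' :=
          by
            rw [smoothSens]
            exact mul_le_mul_right (le_iSup (fun t : ℕ => ENNReal.ofReal (Real.exp (-β * t)) * LSdist d LS t D') (t+1)) _
end

section
/- Sequential composition: if mechanism A₁ satisfies ε₁-differential privacy and mechanism A₂ satisfies ε₂-differential privacy, and both are applied independently to the same database, then the joint mechanism D ↦ (A₁(D), A₂(D)) satisfies (ε₁ + ε₂)-differential privacy. -/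
open MeasureTheory
open scoped ENNReal

/-- `ε`-differential privacy for a measure-valued mechanism. -/
def DPMech {DB : Type*} {Ω : Type*} [MeasurableSpace Ω]
    (Neighbor : DB → DB → Prop) (A : DB → Measure Ω) (ε : ℝ) : Prop :=
  ∀ D D', Neighbor D D' → ∀ S : Set Ω, MeasurableSet S →
    A D S ≤ ENNReal.ofReal (Real.exp ε) * A D' S

/-- Sequential composition: if `A₁` is `ε₁`-DP and `A₂` is `ε₂`-DP and both are run
with independent randomness on the same database, then the joint mechanism
`D ↦ (A₁ D, A₂ D)` (product measure) is `(ε₁ + ε₂)`-DP. -/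
theorem dp_sequential_composition {DB : Type*} {Ω₁ Ω₂ : Type*}
    [MeasurableSpace Ω₁] [MeasurableSpace Ω₂]
    (Neighbor : DB → DB → Prop)
    (A₁ : DB → Measure Ω₁) (A₂ : DB → Measure Ω₂)
    [∀ D, SFinite (A₁ D)] [∀ D, SFinite (A₂ D)]
    (ε₁ ε₂ : ℝ) (h₁ : DPMech Neighbor A₁ ε₁) (h₂ : DPMech Neighbor A₂ ε₂) :
    DPMech Neighbor (fun D => (A₁ D).prod (A₂ D)) (ε₁ + ε₂) := by
  intro D D' hN S hS
  set c₁ := ENNReal.ofReal (Real.exp ε₁)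
  set c₂ := ENNReal.ofReal (Real.exp ε₂)
  have hle1 : A₁ D ≤ c₁ • A₁ D' := by
    rw [Measure.le_iff]
    intro s hs
    simpa using h₁ D D' hN s hs
  calc ((A₁ D).prod (A₂ D)) S
      = ∫⁻ x, A₂ D (Prod.mk x ⁻¹' S) ∂(A₁ D) := Measure.prod_apply hS
    _ ≤ ∫⁻ x, c₂ * A₂ D' (Prod.mk x ⁻¹' S) ∂(A₁ D) :=
        lintegral_mono fun x => h₂ D D' hN _ (measurable_prodMk_left hS)
    _ ≤ ∫⁻ x, c₂ * A₂ D' (Prod.mk x ⁻¹' S) ∂(c₁ • A₁ D') :=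
        lintegral_mono' hle1 (le_refl _)
    _ = c₁ * ∫⁻ x, c₂ * A₂ D' (Prod.mk x ⁻¹' S) ∂(A₁ D') := lintegral_smul_measure _ _
    _ = c₁ * (c₂ * ∫⁻ x, A₂ D' (Prod.mk x ⁻¹' S) ∂(A₁ D')) := by
        rw [lintegral_const_mul]
        exact measurable_measure_prodMk_left hS
    _ = ENNReal.ofReal (Real.exp (ε₁ + ε₂)) * ((A₁ D').prod (A₂ D')) S := by
        rw [← mul_assoc, Measure.prod_apply hS, ← ENNReal.ofReal_mul (Real.exp_nonneg _),
          ← Real.exp_add]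
end
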